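/- There exists a simple graph G on 8 vertices such that G is not isomorphic to its complement Ḡ but G and Ḡ are cospectral (their adjacency matrices have the same characteristic polynomial); in particular, G and Ḡ form a pair of complementary equienergetic graphs of order 8. -/

import Mathlib

/-!
`G8` has degrees `1, 2, 3, 3, 3, 6, 4, 6`, so `G8ᶜ` has degrees `6, 5, 4, 4, 4, 1, 3, 1` and the
two are not isomorphic. Cospectrality is witnessed by an integer solution `P8` of the linear
system `P8 * A = Ā * P8`, which is nonsingular since `P8 * Q8 = 8 • 1`. Then
`P8 * (X - A) = (X - Ā) * P8` over `ℤ[X]`, and cancelling `det P8` gives equal characteristic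
polynomials, hence equal energies.
-/
open Polynomial

/-- Adjacency matrix over ℝ, using classical instances. -/
noncomputable def adjMat {V : Type*} [Finite V] (G : SimpleGraph V) : Matrix V V ℝ :=
  letI := Fintype.ofFinite V
  letI := Classical.decEq V
  letI := Classical.decRel G.Adj
  G.adjMatrix ℝ

/-- The energy of a graph: the sum of the absolute values of the eigenvalues of its
adjacency matrix (equivalently, of the roots of its characteristic polynomial, with
multiplicity, which all are real since the matrix is real symmetric). -/
noncomputable def energy {V : Type*} [Finite V] (G : SimpleGraph V) : ℝ :=
  letI := Fintype.ofFinite V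
  letI := Classical.decEq V
  (((adjMat G).charpoly).roots.map (fun x => |x|)).sum

namespace Matrix

variable {n R : Type*} [Fintype n] [DecidableEq n] [CommRing R] [IsDomain R]

theorem det_ne_zero_of_mul_eq_smul_one {M N : Matrix n n R} {c : R} (hc : c ≠ 0)
    (h : M * N = c • 1) : M.det ≠ 0 := by
  have hdet : M.det * N.det = c ^ Fintype.card n := by
    rw [← det_mul, h, det_smul, det_one, mul_one]
  exact left_ne_zero_of_mul (hdet ▸ pow_ne_zero _ hc)

theorem charpoly_eq_of_mul_eq_mul {A B M : Matrix n n R} (hM : M.det ≠ 0)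
    (h : M * A = B * M) : A.charpoly = B.charpoly := by
  set MX : Matrix n n R[X] := (C : R →+* R[X]).mapMatrix M
  have hcomm : MX * charmatrix A = charmatrix B * MX := by
    rw [charmatrix, charmatrix, mul_sub, sub_mul, ← map_mul, ← map_mul, h,
      (scalar_commute (X : R[X]) (fun _ => Commute.all _ _) MX).eq]
  have hMX : MX.det ≠ 0 := by
    rw [← RingHom.map_det]
    exact C_ne_zero.mpr hM
  have hdet := congrArg det hcomm
  rw [det_mul, det_mul, mul_comm] at hdet
  exact mul_right_cancel₀ hMX hdet

end Matrix

namespace SimpleGraph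

variable {V : Type*}

theorem adjMat_eq_adjMatrix [Fintype V] [DecidableEq V] (G : SimpleGraph V)
    [DecidableRel G.Adj] : adjMat G = G.adjMatrix ℝ := by
  unfold adjMat
  congr

theorem map_adjMatrix {R S : Type*} [NonAssocSemiring R] [NonAssocSemiring S] (f : R →+* S)
    (G : SimpleGraph V) [DecidableRel G.Adj] : (G.adjMatrix R).map f = G.adjMatrix S := by
  ext i j
  simp [adjMatrix_apply, apply_ite f]

theorem charpoly_adjMat_eq_of_intertwine [Fintype V] [DecidableEq V] {G H : SimpleGraph V}
    [DecidableRel G.Adj] [DecidableRel H.Adj] {M : Matrix V V ℤ} (hM : M.det ≠ 0)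
    (h : M * G.adjMatrix ℤ = H.adjMatrix ℤ * M) : (adjMat G).charpoly = (adjMat H).charpoly := by
  rw [adjMat_eq_adjMatrix, adjMat_eq_adjMatrix, ← map_adjMatrix (Int.castRingHom ℝ),
    ← map_adjMatrix (Int.castRingHom ℝ) H, Matrix.charpoly_map, Matrix.charpoly_map,
    Matrix.charpoly_eq_of_mul_eq_mul hM h]

theorem energy_eq_of_charpoly_eq [Fintype V] [DecidableEq V] {G H : SimpleGraph V}
    (h : (adjMat G).charpoly = (adjMat H).charpoly) : energy G = energy H := by
  unfold energy
  convert congrArg (fun p : ℝ[X] => (p.roots.map (fun x => |x|)).sum) h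

theorem not_nonempty_iso_of_degree [Fintype V] {W : Type*} [Fintype W] {G : SimpleGraph V}
    {H : SimpleGraph W} [DecidableRel G.Adj] [DecidableRel H.Adj] (v : V)
    (hv : ∀ w, H.degree w ≠ G.degree v) : ¬ Nonempty (G ≃g H) :=
  fun ⟨f⟩ => hv (f v) (f.degree_eq v)

end SimpleGraph

def G8 : SimpleGraph (Fin 8) :=
  SimpleGraph.fromEdgeSet ↑({s(0, 2), s(1, 5), s(1, 7), s(2, 5), s(2, 7), s(3, 5), s(3, 6),
    s(3, 7), s(4, 5), s(4, 6), s(4, 7), s(5, 6), s(5, 7), s(6, 7)} : Finset (Sym2 (Fin 8)))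

instance : DecidableRel G8.Adj := inferInstanceAs (DecidableRel (SimpleGraph.fromEdgeSet _).Adj)

def P8 : Matrix (Fin 8) (Fin 8) ℤ :=
  !![0, 0, 2, 1, 1, 1, -1, 1;
    -2, 0, 2, -1, -1, 1, 3, 1;
    2, 2, -2, 1, 1, 0, 2, 0;
    0, 0, 0, 1, 1, -1, 0, 3;
    0, 0, 0, 1, 1, 3, 0, -1;
    2, 1, 0, -1, 0, 0, 1, 0;
    0, 0, 0, 1, 1, 1, -1, 1;
    2, 1, 0, 0, -1, 0, 1, 0]

def Q8 : Matrix (Fin 8) (Fin 8) ℤ :=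
  !![0, -2, -2, 4, 4, 2, -6, 2;
    2, 3, 5, -10, -10, -1, 15, -1;
    4, 0, 0, 0, 0, 0, -4, 0;
    2, -1, 1, 2, 2, -5, -5, 3;
    2, -1, 1, 2, 2, 3, -5, -5;
    -2, 1, -1, -1, 1, 1, 5, 1;
    0, 0, 0, 4, 4, 0, -8, 0;
    -2, 1, -1, 1, -1, 1, 5, 1]

theorem P8_mul_Q8 : P8 * Q8 = (8 : ℤ) • 1 := by decide

theorem P8_mul_adjMatrix : P8 * G8.adjMatrix ℤ = G8ᶜ.adjMatrix ℤ * P8 := by decide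

theorem degree_compl_G8_ne (v : Fin 8) : G8ᶜ.degree v ≠ G8.degree 1 := by decide +revert

/-- There is a graph `G` on 8 vertices that is not isomorphic to its complement but is
cospectral with its complement; in particular `G` and `Gᶜ` are a pair of complementary
equienergetic graphs of order 8. -/
theorem exists_noniso_cospectral_compl_order_eight :
    ∃ G : SimpleGraph (Fin 8),
      ¬ Nonempty (G ≃g Gᶜ) ∧
      (adjMat G).charpoly = (adjMat Gᶜ).charpoly ∧
      energy G = energy Gᶜ := by
  have hcospec : (adjMat G8).charpoly = (adjMat G8ᶜ).charpoly :=
    SimpleGraph.charpoly_adjMat_eq_of_intertwine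
      (Matrix.det_ne_zero_of_mul_eq_smul_one (by norm_num) P8_mul_Q8) P8_mul_adjMatrix
  exact ⟨G8, SimpleGraph.not_nonempty_iso_of_degree 1 degree_compl_G8_ne, hcospec,
    SimpleGraph.energy_eq_of_charpoly_eq hcospec⟩
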